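/- arXiv:2107.12574 — 2 statements merged into one kernel-verified Lean document; each statement's English description precedes it below -/
import Mathlib

section
/- For each positive integer n, the equation cot(λ) + (kL/(AE))·(1/λ) − (m/(ρAL))·λ = 0 has exactly one solution λₙ in the interval ((n−1)π, nπ), provided k, L, A, E, ρ > 0 and m > 0. -/
set_option maxHeartbeats 1000000


open Real Set

/-- Lower bound for the cotangent near `0`. -/
lemma cot_lower_bound {t : ℝ} (h0 : 0 < t) (h1 : t ≤ 1 / 2) :
    7 / 8 / t ≤ Real.cos t / Real.sin t := by
  have hπ := Real.pi_gt_three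
  have hs0 : 0 < Real.sin t :=
    Real.sin_pos_of_pos_of_lt_pi h0 (by linarith)
  have hst : Real.sin t ≤ t := (Real.sin_lt h0).le
  have hc : 7 / 8 ≤ Real.cos t := by
    nlinarith [Real.one_sub_sq_div_two_le_cos (x := t)]
  rw [div_le_div_iff₀ h0 hs0]
  nlinarith

/-- The transcendental frequency equation of the fixed-mass-spring bar has exactly
one root in each interval ((n−1)π, nπ). -/
theorem frequency_equation_unique_root
    (k L A E ρ m : ℝ)
    (hk : 0 < k) (hL : 0 < L) (hA : 0 < A) (hE : 0 < E) (hρ : 0 < ρ) (hm : 0 < m)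
    (n : ℕ) (hn : 0 < n) :
    ∃! lam : ℝ, lam ∈ Ioo (((n:ℝ) - 1) * π) ((n:ℝ) * π) ∧
      Real.cos lam / Real.sin lam + (k * L / (A * E)) * (1 / lam)
        - (m / (ρ * A * L)) * lam = 0 := by
  have hπ := Real.pi_gt_three
  set c := k * L / (A * E) with hc_def
  set d := m / (ρ * A * L) with hd_def
  have hc : 0 < c := by positivity
  have hd : 0 < d := by positivity
  set a := ((n : ℝ) - 1) * π with ha_def
  set b := (n : ℝ) * π with hb_def
  have hn1 : (1 : ℝ) ≤ (n : ℝ) := by exact_mod_cast hn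
  have ha0 : 0 ≤ a := by
    have : (0:ℝ) ≤ (n : ℝ) - 1 := by linarith
    positivity
  have hba : b = a + π := by rw [ha_def, hb_def]; ring
  have hbπ : π ≤ b := by
    rw [hb_def]; nlinarith
  set f : ℝ → ℝ := fun x => Real.cos x / Real.sin x + c * (1 / x) - d * x with hf_def
  -- positivity and nonvanishing of sin on the interval
  have hmem : ∀ x ∈ Ioo a b, 0 < x ∧ Real.sin x ≠ 0 := by
    intro x hx
    have hx1 : a < x := hx.1
    have hx2 : x < b := hx.2
    have hxpos : 0 < x := by
      rcases eq_or_lt_of_le hn1 with h | h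
      · rw [ha_def] at hx1; rw [← h] at hx1; simpa using hx1
      · have : 0 < a := by
          rw [ha_def]; have : (0:ℝ) < (n:ℝ) - 1 := by linarith
          positivity
        linarith
    refine ⟨hxpos, ?_⟩
    intro hs
    rw [Real.sin_eq_zero_iff] at hs
    obtain ⟨j, hj⟩ := hs
    have hj1 : ((n : ℝ) - 1) * π < (j : ℝ) * π := by rw [hj]; exact hx1
    have hj2 : (j : ℝ) * π < (n : ℝ) * π := by rw [hj]; exact hx2
    have hπ0 : (0:ℝ) < π := Real.pi_pos
    have h1 : (n : ℝ) - 1 < (j : ℝ) := by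
      exact lt_of_mul_lt_mul_right hj1 hπ0.le
    have h2 : (j : ℝ) < (n : ℝ) := by
      exact lt_of_mul_lt_mul_right hj2 hπ0.le
    have h1' : (n : ℤ) - 1 < j := by exact_mod_cast (by push_cast; linarith : ((n:ℤ) - 1 : ℝ) < (j:ℝ))
    have h2' : j < (n : ℤ) := by exact_mod_cast h2
    omega
  -- shift identity for the cotangent
  have hshift : ∀ t : ℝ, Real.cos (a + t) / Real.sin (a + t) = Real.cos t / Real.sin t := by
    intro t
    have ha' : a = ((n : ℤ) - 1 : ℤ) * π := by rw [ha_def]; push_cast; ring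
    rw [add_comm, ha', Real.cos_add_int_mul_pi, Real.sin_add_int_mul_pi,
      mul_div_mul_left _ _ (zpow_ne_zero _ (by norm_num : (-1:ℝ) ≠ 0))]
  -- derivative is negative on the interval
  have hderiv : ∀ x ∈ Ioo a b, HasDerivAt f
      ((-Real.sin x * Real.sin x - Real.cos x * Real.cos x) / (Real.sin x) ^ 2
        + c * (-(x ^ 2)⁻¹) - d * 1) x := by
    intro x hx
    obtain ⟨hxpos, hsin⟩ := hmem x hx
    have h1 : HasDerivAt (fun y => Real.cos y / Real.sin y)
        ((-Real.sin x * Real.sin x - Real.cos x * Real.cos x) / (Real.sin x) ^ 2) x :=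
      (Real.hasDerivAt_cos x).div (Real.hasDerivAt_sin x) hsin
    have h2 : HasDerivAt (fun y : ℝ => c * (1 / y)) (c * (-(x ^ 2)⁻¹)) x := by
      simpa [one_div] using (hasDerivAt_inv hxpos.ne').const_mul c
    have h3 : HasDerivAt (fun y : ℝ => d * y) (d * 1) x :=
      (hasDerivAt_id x).const_mul d
    exact (h1.add h2).sub h3
  have hderivneg : ∀ x ∈ Ioo a b,
      (-Real.sin x * Real.sin x - Real.cos x * Real.cos x) / (Real.sin x) ^ 2
        + c * (-(x ^ 2)⁻¹) - d * 1 < 0 := by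
    intro x hx
    obtain ⟨hxpos, hsin⟩ := hmem x hx
    have hs2 : 0 < (Real.sin x) ^ 2 := by positivity
    have hx2 : 0 < (x ^ 2)⁻¹ := by positivity
    have hnum : -Real.sin x * Real.sin x - Real.cos x * Real.cos x = -1 := by
      nlinarith [Real.sin_sq_add_cos_sq x]
    rw [hnum]
    have h1 : (-1 : ℝ) / (Real.sin x) ^ 2 < 0 := by
      apply div_neg_of_neg_of_pos <;> [norm_num; exact hs2]
    nlinarith
  have hcont : ContinuousOn f (Ioo a b) := fun x hx =>
    (hderiv x hx).differentiableAt.continuousAt.continuousWithinAt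
  have hanti : StrictAntiOn f (Ioo a b) := by
    apply strictAntiOn_of_deriv_neg (convex_Ioo a b) hcont
    intro x hx
    rw [interior_Ioo] at hx
    rw [(hderiv x hx).deriv]
    exact hderivneg x hx
  -- test points
  set t : ℝ := min (1 / 2) (1 / (2 * (d * b + 1))) with ht_def
  set s : ℝ := min (1 / 2) (1 / (2 * (c + 1))) with hs_def
  have ht0 : 0 < t := lt_min (by norm_num) (by positivity)
  have ht12 : t ≤ 1 / 2 := min_le_left _ _
  have hs0 : 0 < s := lt_min (by norm_num) (by positivity)
  have hs12 : s ≤ 1 / 2 := min_le_left _ _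
  set x₁ : ℝ := a + t with hx1_def
  set x₂ : ℝ := b - s with hx2_def
  have hx1mem : x₁ ∈ Ioo a b := by
    constructor
    · rw [hx1_def]; linarith
    · rw [hx1_def, hba]; linarith
  have hx2mem : x₂ ∈ Ioo a b := by
    constructor
    · rw [hx2_def, hba]; linarith
    · rw [hx2_def]; linarith
  have hx12 : x₁ ≤ x₂ := by
    rw [hx1_def, hx2_def, hba]; linarith
  -- f is positive at x₁
  have hfx1 : 0 < f x₁ := by
    have hcot : Real.cos x₁ / Real.sin x₁ = Real.cos t / Real.sin t := hshift t
    have hlow := cot_lower_bound ht0 ht12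
    have htb : t ≤ 1 / (2 * (d * b + 1)) := min_le_right _ _
    have hdb1 : 0 < 2 * (d * b + 1) := by positivity
    have hmul : t * (2 * (d * b + 1)) ≤ 1 := by
      rw [le_div_iff₀ hdb1] at htb; linarith
    have h78 : 7 / 8 * (2 * (d * b + 1)) ≤ 7 / 8 / t := by
      rw [le_div_iff₀ ht0]; nlinarith
    have hx1pos : 0 < x₁ := (hmem x₁ hx1mem).1
    have hdx1 : d * x₁ ≤ d * b := by
      have := hx1mem.2; nlinarith
    have hcx1 : 0 < c * (1 / x₁) := by positivity
    have hdb0 : 0 ≤ d * b := by positivity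
    rw [hf_def]
    simp only [hx1_def] at hcot ⊢
    rw [hcot]
    nlinarith
  -- f is negative at x₂
  have hfx2 : f x₂ < 0 := by
    have hx2a : x₂ = a + (π - s) := by rw [hx2_def, hba]; ring
    have hcot : Real.cos x₂ / Real.sin x₂ = -(Real.cos s / Real.sin s) := by
      rw [hx2a, hshift (π - s), Real.cos_pi_sub, Real.sin_pi_sub, neg_div]
    have hlow := cot_lower_bound hs0 hs12
    have hsc : s ≤ 1 / (2 * (c + 1)) := min_le_right _ _
    have hc1 : 0 < 2 * (c + 1) := by positivity
    have hmul : s * (2 * (c + 1)) ≤ 1 := by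
      rw [le_div_iff₀ hc1] at hsc; linarith
    have h78 : 7 / 8 * (2 * (c + 1)) ≤ 7 / 8 / s := by
      rw [le_div_iff₀ hs0]; nlinarith
    have hx2pos : (2:ℝ) ≤ x₂ := by rw [hx2_def]; linarith
    have hcx2 : c * (1 / x₂) ≤ c * (1 / 2) := by
      have h1 : (1:ℝ) / x₂ ≤ 1 / 2 := by
        apply one_div_le_one_div_of_le <;> linarith
      nlinarith
    have hdx2 : 0 < d * x₂ := by
      have : (0:ℝ) < x₂ := by linarith
      positivity
    rw [hf_def]
    simp only []
    rw [hcot]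
    nlinarith
  -- existence via IVT
  have hsub : Icc x₁ x₂ ⊆ Ioo a b := fun y hy =>
    ⟨lt_of_lt_of_le hx1mem.1 hy.1, lt_of_le_of_lt hy.2 hx2mem.2⟩
  have hivt : (0:ℝ) ∈ f '' Icc x₁ x₂ := by
    apply intermediate_value_Icc' hx12 (hcont.mono hsub)
    exact ⟨hfx2.le, hfx1.le⟩
  obtain ⟨lam, hlam, hflam⟩ := hivt
  have hlammem : lam ∈ Ioo a b := hsub hlam
  refine ⟨lam, ⟨hlammem, hflam⟩, ?_⟩
  intro y hy
  obtain ⟨hymem, hfy⟩ := hy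
  have hfy' : f y = 0 := hfy
  by_contra hne
  rcases lt_or_gt_of_ne hne with h | h
  · have h2 := hanti hymem hlammem h
    rw [hflam, hfy'] at h2
    exact lt_irrefl 0 h2
  · have h2 := hanti hlammem hymem h
    rw [hflam, hfy'] at h2
    exact lt_irrefl 0 h2
end

section
/- As β = m/(ρAL) → ∞ with α = kL/(AE) fixed, the first root λ₁(β) ∈ (0, π) of cot λ + α/λ − βλ = 0 tends to 0, and β·λ₁(β)² → 1 + α; equivalently m ν₁² → (EA/L) + k, recovering the limiting mass-spring oscillator frequency ν₁ ≈ √((EA/L + k)/m). -/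
open Real Set Filter

/-- As the mass ratio β = m/(ρAL) → ∞ (α = kL/(AE) fixed), the first root λ₁(β)
of the frequency equation tends to 0 with β·λ₁(β)² → 1 + α; equivalently
m·ν₁² → EA/L + k, recovering the limiting mass-spring oscillator. -/
theorem first_root_large_mass_limit
    (k L A E ρ : ℝ)
    (hk : 0 < k) (hL : 0 < L) (hA : 0 < A) (hE : 0 < E) (hρ : 0 < ρ)
    (α : ℝ) (hα : α = k * L / (A * E))
    (l1 : ℝ → ℝ)
    (hl1 : ∀ β : ℝ, 0 < β →
      l1 β ∈ Ioo (0:ℝ) π ∧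
      Real.cos (l1 β) / Real.sin (l1 β) + α / l1 β - β * l1 β = 0) :
    Tendsto l1 atTop (nhds 0)
    ∧ Tendsto (fun β => β * (l1 β) ^ 2) atTop (nhds (1 + α))
    ∧ Tendsto (fun β => (β * ρ * A * L) * (l1 β * Real.sqrt (E / ρ) / L) ^ 2)
        atTop (nhds (E * A / L + k)) := by
  have hα0 : 0 < α := by rw [hα]; positivity
  -- key inequality: x * cos x ≤ sin x on (0, π)
  have key : ∀ x ∈ Ioo (0:ℝ) π, x * Real.cos x ≤ Real.sin x := by
    intro x hx
    rcases lt_or_ge x (π / 2) with h | h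
    · have hc : 0 < Real.cos x := Real.cos_pos_of_mem_Ioo
        ⟨by linarith [hx.1, Real.pi_pos], h⟩
      have ht := Real.lt_tan hx.1 h
      rw [Real.tan_eq_sin_div_cos, lt_div_iff₀ hc] at ht
      linarith
    · have hs : 0 < Real.sin x := Real.sin_pos_of_pos_of_lt_pi hx.1 hx.2
      have hc : Real.cos x ≤ 0 :=
        Real.cos_nonpos_of_pi_div_two_le_of_le h (by linarith [hx.2, Real.pi_pos])
      nlinarith [hx.1]
  -- algebraic identity from the frequency equation
  have hbd : ∀ β : ℝ, 0 < β →
      β * (l1 β) ^ 2 = l1 β * Real.cos (l1 β) / Real.sin (l1 β) + α := by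
    intro β hβ
    obtain ⟨hmem, heq⟩ := hl1 β hβ
    have hlam : l1 β ≠ 0 := ne_of_gt hmem.1
    have hs : Real.sin (l1 β) ≠ 0 :=
      ne_of_gt (Real.sin_pos_of_pos_of_lt_pi hmem.1 hmem.2)
    field_simp at heq ⊢
    nlinarith [heq]
  -- upper bound and squeeze
  have hub : ∀ β : ℝ, 0 < β → l1 β ≤ Real.sqrt ((1 + α) / β) := by
    intro β hβ
    obtain ⟨hmem, _⟩ := hl1 β hβ
    have hs : 0 < Real.sin (l1 β) := Real.sin_pos_of_pos_of_lt_pi hmem.1 hmem.2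
    have hk2 : l1 β * Real.cos (l1 β) / Real.sin (l1 β) ≤ 1 :=
      (div_le_one hs).2 (key _ hmem)
    have h1 : β * (l1 β) ^ 2 ≤ 1 + α := by
      rw [hbd β hβ]; linarith
    rw [Real.le_sqrt hmem.1.le (by positivity)]
    rw [le_div_iff₀ hβ]; linarith
  have hsq : Tendsto (fun β => Real.sqrt ((1 + α) / β)) atTop (nhds 0) := by
    have h1 : Tendsto (fun β : ℝ => (1 + α) / β) atTop (nhds 0) :=
      tendsto_const_nhds.div_atTop tendsto_id
    have := (Real.continuous_sqrt.tendsto' 0 0 (by simp)).comp h1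
    exact this
  have h0 : Tendsto l1 atTop (nhds 0) := by
    apply tendsto_of_tendsto_of_tendsto_of_le_of_le' tendsto_const_nhds hsq
    · filter_upwards [eventually_gt_atTop (0:ℝ)] with β hβ
      exact (hl1 β hβ).1.1.le
    · filter_upwards [eventually_gt_atTop (0:ℝ)] with β hβ
      exact hub β hβ
  have h0' : Tendsto l1 atTop (nhdsWithin 0 {(0:ℝ)}ᶜ) := by
    apply tendsto_nhdsWithin_of_tendsto_nhds_of_eventually_within _ h0
    filter_upwards [eventually_gt_atTop (0:ℝ)] with β hβ
    exact ne_of_gt (hl1 β hβ).1.1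
  -- sin x / x → 1
  have hsin : Tendsto (fun x => Real.sin x / x) (nhdsWithin 0 {(0:ℝ)}ᶜ) (nhds 1) := by
    have h := Real.hasDerivAt_sin 0
    rw [hasDerivAt_iff_tendsto_slope] at h
    simpa [slope_fun_def, Real.sin_zero, Real.cos_zero, div_eq_inv_mul] using h
  have hg : Tendsto (fun x => x * Real.cos x / Real.sin x)
      (nhdsWithin 0 {(0:ℝ)}ᶜ) (nhds 1) := by
    have hc : Tendsto Real.cos (nhdsWithin 0 {(0:ℝ)}ᶜ) (nhds 1) :=
      (Real.continuous_cos.tendsto' 0 1 (by simp)).mono_left nhdsWithin_le_nhds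
    have h := hc.div hsin one_ne_zero
    norm_num at h
    exact h.congr fun x => by
      rw [Pi.div_apply, div_div_eq_mul_div, mul_comm]
  have h2 : Tendsto (fun β => β * (l1 β) ^ 2) atTop (nhds (1 + α)) := by
    have h : Tendsto (fun β => ((fun x => x * Real.cos x / Real.sin x) ∘ l1) β + α)
        atTop (nhds (1 + α)) := (hg.comp h0').add tendsto_const_nhds
    apply Tendsto.congr' _ h
    filter_upwards [eventually_gt_atTop (0:ℝ)] with β hβ
    simp only [Function.comp_apply]
    rw [hbd β hβ]
  refine ⟨h0, h2, ?_⟩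
  have hfun : ∀ β : ℝ, (β * ρ * A * L) * (l1 β * Real.sqrt (E / ρ) / L) ^ 2
      = β * (l1 β) ^ 2 * (A * E / L) := by
    intro β
    have hsq2 : Real.sqrt (E / ρ) ^ 2 = E / ρ := Real.sq_sqrt (by positivity)
    rw [div_pow, mul_pow, hsq2]
    field_simp
  have hval : (1 + α) * (A * E / L) = E * A / L + k := by
    rw [hα]; field_simp
  have h3 := h2.mul_const (A * E / L)
  rw [hval] at h3
  exact h3.congr fun β => (hfun β).symm
end
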